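/- arXiv:1503.05686 — 4 statements merged into one kernel-verified Lean document; each statement's English description precedes it below -/
import Mathlib

section
/- Let ℓ, n be integers with 2 ≤ ℓ ≤ n, and let p₁, …, p_ℓ ∈ ℝⁿ be points in general position. Then the distance-squared mapping D_{(p₁,…,p_ℓ)} : ℝⁿ → ℝ^ℓ is A-equivalent to the normal form of definite fold mappings Φ_ℓ. -/
/-- A `C^∞` diffeomorphism of a normed space onto itself. -/
def IsSmoothDiffeo {E : Type*} [NormedAddCommGroup E] [NormedSpace ℝ E] (φ : E → E) : Prop :=
  ContDiff ℝ (⊤ : ℕ∞) φ ∧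
    ∃ φi : E → E, ContDiff ℝ (⊤ : ℕ∞) φi ∧ (∀ x, φi (φ x) = x) ∧ (∀ y, φ (φi y) = y)

/-- `f` and `g` are `𝒜`-equivalent: `ψ ∘ f ∘ φ = g` for some `C^∞` diffeomorphisms
`φ` of the source and `ψ` of the target. -/
def AEquiv {E F : Type*} [NormedAddCommGroup E] [NormedSpace ℝ E]
    [NormedAddCommGroup F] [NormedSpace ℝ F] (f g : E → F) : Prop :=
  ∃ (φ : E → E) (ψ : F → F), IsSmoothDiffeo φ ∧ IsSmoothDiffeo ψ ∧ ψ ∘ f ∘ φ = g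

/-- The distance-squared mapping `D_{(p₁,…,p_ℓ)} : ℝⁿ → ℝ^ℓ`,
`x ↦ (|x-p₁|², …, |x-p_ℓ|²)` (Euclidean norm). -/
def distSqMap {n ℓ : ℕ} (p : Fin ℓ → (Fin n → ℝ)) (x : Fin n → ℝ) : Fin ℓ → ℝ :=
  fun i => ∑ j, (x j - p i j) ^ 2

/-!
Translate `p₁` to the origin and rotate so that `p₂ - p₁, …, p_ℓ - p₁` span the first `ℓ - 1`
coordinate axes. Since `|x - pᵢ|² = |x|² - 2⟪x, pᵢ - p₁⟫ + |pᵢ - p₁|²`, an affine change of the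
target, invertible by general position, turns `D` into `x ↦ (x₁, …, x_{ℓ-1}, |x|²)`; the shear
subtracting `x₁² + ⋯ + x_{ℓ-1}²` from the last coordinate turns this into `Φ_ℓ`.
-/

open Finset Submodule RealInnerProductSpace

section Diffeo

variable {E : Type*} [NormedAddCommGroup E] [NormedSpace ℝ E]

theorem isSmoothDiffeo_id : IsSmoothDiffeo (id : E → E) :=
  ⟨contDiff_id, id, contDiff_id, fun _ => rfl, fun _ => rfl⟩

theorem IsSmoothDiffeo.comp {φ ψ : E → E} (hφ : IsSmoothDiffeo φ) (hψ : IsSmoothDiffeo ψ) :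
    IsSmoothDiffeo (φ ∘ ψ) := by
  obtain ⟨hφ, φi, hφi, hφl, hφr⟩ := hφ
  obtain ⟨hψ, ψi, hψi, hψl, hψr⟩ := hψ
  exact ⟨hφ.comp hψ, ψi ∘ φi, hψi.comp hφi, fun x => by simp [hφl, hψl],
    fun y => by simp [hφr, hψr]⟩

theorem IsSmoothDiffeo.exists_inverse {φ : E → E} (hφ : IsSmoothDiffeo φ) :
    ∃ φi : E → E, IsSmoothDiffeo φi ∧ φi ∘ φ = id ∧ φ ∘ φi = id := by
  obtain ⟨hφ, φi, hφi, hl, hr⟩ := hφ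
  exact ⟨φi, ⟨hφi, φ, hφ, hr, hl⟩, funext hl, funext hr⟩

theorem ContinuousLinearEquiv.isSmoothDiffeo_add_const (L : E ≃L[ℝ] E) (c : E) :
    IsSmoothDiffeo fun x => L x + c :=
  ⟨L.contDiff.add contDiff_const, fun y => L.symm (y - c),
    L.symm.contDiff.comp (contDiff_id.sub contDiff_const), fun x => by simp,
    fun y => by simp⟩

/-- `P` is unchanged by the shear, so subtracting the same correction inverts it. -/
theorem isSmoothDiffeo_add_comp {F : Type*} [NormedAddCommGroup F] [NormedSpace ℝ F]
    (P : E →L[ℝ] F) {h : F → E} (hh : ContDiff ℝ (⊤ : ℕ∞) h) (hPh : ∀ y, P (h y) = 0) :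
    IsSmoothDiffeo fun z => z + h (P z) := by
  have hP : ∀ z, P (z + h (P z)) = P z := fun z => by rw [map_add, hPh, add_zero]
  have hP' : ∀ z, P (z - h (P z)) = P z := fun z => by rw [map_sub, hPh, sub_zero]
  exact ⟨contDiff_id.add (hh.comp P.contDiff), fun z => z - h (P z),
    contDiff_id.sub (hh.comp P.contDiff), fun z => by simp only [hP, add_sub_cancel_right],
    fun z => by simp only [hP', sub_add_cancel]⟩

end Diffeo

namespace AEquiv

variable {E F : Type*} [NormedAddCommGroup E] [NormedSpace ℝ E]
  [NormedAddCommGroup F] [NormedSpace ℝ F] {f g h : E → F}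

theorem symm (hfg : AEquiv f g) : AEquiv g f := by
  obtain ⟨φ, ψ, hφ, hψ, rfl⟩ := hfg
  obtain ⟨φi, hφi, hφl, hφr⟩ := hφ.exists_inverse
  obtain ⟨ψi, hψi, hψl, hψr⟩ := hψ.exists_inverse
  refine ⟨φi, ψi, hφi, hψi, ?_⟩
  simp only [← Function.comp_assoc, hψl]
  simp [Function.comp_assoc, hφr]

theorem trans (hfg : AEquiv f g) (hgh : AEquiv g h) : AEquiv f h := by
  obtain ⟨φ, ψ, hφ, hψ, rfl⟩ := hfg
  obtain ⟨φ', ψ', hφ', hψ', rfl⟩ := hgh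
  exact ⟨φ ∘ φ', ψ' ∘ ψ, hφ.comp hφ', hψ'.comp hψ, rfl⟩

theorem comp_left {ψ : F → F} (hψ : IsSmoothDiffeo ψ) (f : E → F) : AEquiv f (ψ ∘ f) :=
  ⟨id, ψ, isSmoothDiffeo_id, hψ, rfl⟩

theorem comp_right {φ : E → E} (hφ : IsSmoothDiffeo φ) (f : E → F) : AEquiv f (f ∘ φ) :=
  ⟨φ, id, hφ, isSmoothDiffeo_id, rfl⟩

end AEquiv

section InnerProduct

variable {E : Type*} [NormedAddCommGroup E] [InnerProductSpace ℝ E]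

theorem Orthonormal.inner_eq_sum_of_mem_span {ι : Type*} [Fintype ι] {e : ι → E}
    (he : Orthonormal ℝ e) {u : E} (hu : u ∈ span ℝ (Set.range e)) (w : E) :
    ⟪w, u⟫ = ∑ k, ⟪e k, u⟫ * ⟪w, e k⟫ := by
  obtain ⟨c, rfl⟩ := (mem_span_range_iff_exists_fun ℝ).mp hu
  simp [inner_sum, inner_smul_right, he.inner_right_fintype]

theorem Orthonormal.eq_zero_of_inner_sum_smul_eq_zero {ι κ : Type*} [Fintype ι] [Fintype κ]
    {e : ι → E} {v : κ → E} (he : Orthonormal ℝ e)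
    (hspan : span ℝ (Set.range e) ≤ span ℝ (Set.range v)) {ξ : ι → ℝ}
    (h : ∀ j, ⟪∑ k, ξ k • e k, v j⟫ = 0) : ξ = 0 := by
  obtain ⟨c, hc⟩ := (mem_span_range_iff_exists_fun ℝ).mp
    (hspan (sum_mem fun k _ => smul_mem _ _ (subset_span ⟨k, rfl⟩)))
  have hw : ∑ k, ξ k • e k = 0 := by
    rw [← inner_self_eq_zero (𝕜 := ℝ)]
    nth_rw 2 [← hc]
    simp [inner_sum, inner_smul_right, h]
  funext k
  simpa [hw] using (he.inner_right_fintype ξ k).symm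

theorem exists_orthonormalBasis_span_comp_castLE [FiniteDimensional ℝ E] {m n : ℕ}
    (hn : Module.finrank ℝ E = n) (hm : m ≤ n) {v : Fin m → E} (hv : LinearIndependent ℝ v) :
    ∃ b : OrthonormalBasis (Fin n) ℝ E,
      span ℝ (Set.range (b ∘ Fin.castLE hm)) = span ℝ (Set.range v) := by
  let e := InnerProductSpace.gramSchmidtNormed ℝ v
  let e' : Fin n → E := fun i => if h : (i : ℕ) < m then e ⟨i, h⟩ else 0
  have he' : Orthonormal ℝ ({i : Fin n | (i : ℕ) < m}.domRestrict e') := by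
    have : {i : Fin n | (i : ℕ) < m}.domRestrict e' = e ∘ fun i => ⟨i.1, i.2⟩ :=
      funext fun i => dif_pos i.2
    rw [this]
    exact (InnerProductSpace.gramSchmidtNormed_orthonormal hv).comp _
      fun i j hij => Subtype.ext (Fin.ext (Fin.mk.inj_iff.mp hij))
  obtain ⟨b, hb⟩ := he'.exists_orthonormalBasis_extension_of_card_eq (by simpa using hn)
  have hbe : b ∘ Fin.castLE hm = e := funext fun k => (hb _ k.isLt).trans (dif_pos k.isLt)
  refine ⟨b, ?_⟩
  rw [hbe, InnerProductSpace.span_gramSchmidtNormed_range, InnerProductSpace.span_gramSchmidt]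

end InnerProduct

/-- The linear part of the target change of coordinates. It is invertible because `u 0 = 0`
isolates `z (last m)` and the `e k` lie in the span of the `u (succ j)`. -/
theorem exists_continuousLinearEquiv_sub_two_inner {E : Type*} [NormedAddCommGroup E]
    [InnerProductSpace ℝ E] {m : ℕ} {e : Fin m → E} {u : Fin (m + 1) → E}
    (he : Orthonormal ℝ e) (hspan : span ℝ (Set.range e) ≤ span ℝ (Set.range (u ∘ Fin.succ)))
    (hu : u 0 = 0) :
    ∃ T : (Fin (m + 1) → ℝ) ≃L[ℝ] (Fin (m + 1) → ℝ), ∀ z i,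
      T z i = z (Fin.last m) - 2 * ∑ k, ⟪e k, u i⟫ * z (Fin.castSucc k) := by
  let T : (Fin (m + 1) → ℝ) →ₗ[ℝ] (Fin (m + 1) → ℝ) := LinearMap.pi fun i =>
    LinearMap.proj (Fin.last m) - (2 : ℝ) • ∑ k, ⟪e k, u i⟫ • LinearMap.proj (Fin.castSucc k)
  have hT : ∀ z i, T z i = z (Fin.last m) - 2 * ∑ k, ⟪e k, u i⟫ * z (Fin.castSucc k) := by
    intro z i
    simp [T]
  have hinj : Function.Injective T := by
    rw [← LinearMap.ker_eq_bot, LinearMap.ker_eq_bot']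
    intro z hz
    have hlast : z (Fin.last m) = 0 := by simpa [hT, hu] using congrFun hz 0
    have hinit : (fun k => z (Fin.castSucc k)) = 0 := by
      refine he.eq_zero_of_inner_sum_smul_eq_zero hspan fun j => ?_
      have := congrFun hz j.succ
      simp only [hT, hlast, Pi.zero_apply] at this
      simpa [sum_inner, real_inner_smul_left, mul_comm] using this
    funext i
    induction i using Fin.lastCases with
    | last => exact hlast
    | cast k => exact congrFun hinit k
  exact ⟨(LinearEquiv.ofInjectiveEndo T hinj).toContinuousLinearEquiv, hT⟩

theorem Fin.sum_castLE_add_sum_filter_le {M : Type*} [AddCommMonoid M] {m n : ℕ} (hm : m ≤ n)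
    (f : Fin n → M) :
    ∑ k : Fin m, f (Fin.castLE hm k) + ∑ l ∈ univ.filter (fun l : Fin n => m ≤ (l : ℕ)), f l =
      ∑ l, f l := by
  rw [← sum_filter_not_add_sum_filter univ (fun l : Fin n => m ≤ (l : ℕ))]
  congr 1
  refine sum_nbij (Fin.castLE hm) (fun k _ => by simp) (Fin.castLE_injective hm).injOn
    (fun l hl => ⟨⟨l, by simpa using hl⟩, by simp, rfl⟩) fun _ _ => rfl

section FoldNormalForm

variable {m n : ℕ} (hm : m ≤ n)

def firstCoordsSqNorm (x : Fin n → ℝ) : Fin (m + 1) → ℝ :=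
  Fin.snoc (fun k => x (Fin.castLE hm k)) (∑ l, x l ^ 2)

def definiteFold (x : Fin n → ℝ) : Fin (m + 1) → ℝ :=
  Fin.snoc (fun k => x (Fin.castLE hm k))
    (∑ l ∈ univ.filter (fun l : Fin n => m ≤ (l : ℕ)), x l ^ 2)

theorem firstCoordsSqNorm_aEquiv_definiteFold :
    AEquiv (firstCoordsSqNorm hm) (definiteFold hm) := by
  let P : (Fin (m + 1) → ℝ) →L[ℝ] (Fin m → ℝ) :=
    LinearMap.toContinuousLinearMap (LinearMap.funLeft ℝ ℝ Fin.castSucc)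
  let h : (Fin m → ℝ) → Fin (m + 1) → ℝ := fun y => (-∑ k, y k ^ 2) • Pi.single (Fin.last m) 1
  have hh : ContDiff ℝ (⊤ : ℕ∞) h :=
    (ContDiff.sum fun k _ => (contDiff_apply ℝ ℝ k).pow 2).neg.smul contDiff_const
  have hPh : ∀ y, P (h y) = 0 := fun y => by
    funext k
    simp [P, h, LinearMap.funLeft, Fin.castSucc_ne_last]
  convert AEquiv.comp_left (isSmoothDiffeo_add_comp P hh hPh) (firstCoordsSqNorm hm)
  funext x i
  induction i using Fin.lastCases with
  | last =>
    simp [P, h, definiteFold, firstCoordsSqNorm, LinearMap.funLeft,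
      ← Fin.sum_castLE_add_sum_filter_le hm]
  | cast k =>
    simp [P, h, definiteFold, firstCoordsSqNorm, LinearMap.funLeft, Fin.castSucc_ne_last]

end FoldNormalForm

theorem distSqMap_apply_eq_norm_sq {n ℓ : ℕ} (p : Fin ℓ → Fin n → ℝ) (x : Fin n → ℝ) (i : Fin ℓ) :
    distSqMap p x i = ‖WithLp.toLp 2 (x - p i)‖ ^ 2 := by
  simp [distSqMap, EuclideanSpace.real_norm_sq_eq]

theorem distSqMap_aEquiv_firstCoordsSqNorm {m n : ℕ} (hm : m ≤ n) (p : Fin (m + 1) → Fin n → ℝ)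
    (hp : LinearIndependent ℝ fun j : Fin m => p j.succ - p 0) :
    AEquiv (distSqMap p) (firstCoordsSqNorm hm) := by
  let u : Fin (m + 1) → EuclideanSpace ℝ (Fin n) := fun i => WithLp.toLp 2 (p i - p 0)
  have hu : LinearIndependent ℝ (u ∘ Fin.succ) :=
    hp.map' (WithLp.linearEquiv 2 ℝ (Fin n → ℝ)).symm.toLinearMap (LinearEquiv.ker _)
  obtain ⟨b, hb⟩ := exists_orthonormalBasis_span_comp_castLE finrank_euclideanSpace_fin hm hu
  have he : Orthonormal ℝ (b ∘ Fin.castLE hm) := b.orthonormal.comp _ (Fin.castLE_injective hm)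
  have hue : ∀ i, u i ∈ span ℝ (Set.range (b ∘ Fin.castLE hm)) := by
    refine Fin.cases (by simp [u]) fun j => ?_
    rw [hb]
    exact subset_span ⟨j, rfl⟩
  obtain ⟨T, hT⟩ := exists_continuousLinearEquiv_sub_two_inner he hb.le (by simp [u])
  let L : (Fin n → ℝ) ≃L[ℝ] (Fin n → ℝ) := (EuclideanSpace.equiv (Fin n) ℝ).symm.trans
    (b.repr.symm.toContinuousLinearEquiv.trans (EuclideanSpace.equiv (Fin n) ℝ))
  have key : distSqMap p ∘ (fun x => L x + p 0) =
      (fun z => T z + fun i => ‖u i‖ ^ 2) ∘ firstCoordsSqNorm hm := by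
    funext x i
    set w := b.repr.symm (WithLp.toLp 2 x)
    have hw : WithLp.toLp 2 (L x + p 0 - p i) = w - u i := by
      rw [WithLp.toLp_sub, WithLp.toLp_add, show WithLp.toLp 2 (L x) = w from rfl]
      simp only [u, WithLp.toLp_sub]
      abel
    have hww : ‖w‖ ^ 2 = ∑ l, x l ^ 2 := by simp [w, EuclideanSpace.real_norm_sq_eq]
    have hwe : ∀ k, ⟪w, b (Fin.castLE hm k)⟫ = x (Fin.castLE hm k) := fun k => by
      rw [real_inner_comm, ← b.repr_apply_apply]; simp [w]
    simp only [Function.comp_apply, distSqMap_apply_eq_norm_sq, hw, norm_sub_sq_real, hww,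
      he.inner_eq_sum_of_mem_span (hue i) w, Pi.add_apply, hT]
    simp [firstCoordsSqNorm, hwe]
  exact (AEquiv.comp_right (L.isSmoothDiffeo_add_const (p 0)) _).trans
    (key ▸ (AEquiv.comp_left (T.isSmoothDiffeo_add_const _) _).symm)

/-- for `2 ≤ ℓ ≤ n` and `p₁,…,p_ℓ ∈ ℝⁿ` in general position, the
distance-squared mapping `D_{(p₁,…,p_ℓ)}` is `𝒜`-equivalent to the normal form of
definite fold mappings `Φ_ℓ(x₁,…,xₙ) = (x₁,…,x_{ℓ-1}, x_ℓ² + ⋯ + xₙ²)`. -/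
theorem distSqMap_AEquiv_definite_fold {n ℓ : ℕ} (h2 : 2 ≤ ℓ) (hn : ℓ ≤ n)
    (p : Fin ℓ → (Fin n → ℝ))
    (hgen : LinearIndependent ℝ
      (fun j : Fin (ℓ - 1) =>
        p ⟨(j : ℕ) + 1, by have := j.isLt; omega⟩ - p ⟨0, by omega⟩)) :
    AEquiv (distSqMap p)
      (fun (x : Fin n → ℝ) (j : Fin ℓ) =>
        if h : (j : ℕ) < ℓ - 1 then x ⟨(j : ℕ), by omega⟩
        else ∑ l ∈ Finset.univ.filter (fun l : Fin n => ℓ - 1 ≤ (l : ℕ)), x l ^ 2) := by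
  obtain ⟨m, rfl⟩ : ∃ m, ℓ = m + 1 := ⟨ℓ - 1, by omega⟩
  have hm : m ≤ n := by omega
  convert (distSqMap_aEquiv_firstCoordsSqNorm hm p hgen).trans
    (firstCoordsSqNorm_aEquiv_definiteFold hm) using 1
  funext x j
  induction j using Fin.lastCases with
  | last => simp [definiteFold]
  | cast k => simp [definiteFold]; rfl
end

section
/- Let ℓ, n be integers with 2 ≤ n < ℓ, and let p₁, …, p_ℓ ∈ ℝⁿ be points such that p₁, …, p_{n+1} are in general position. Then the distance-squared mapping D_{(p₁,…,p_ℓ)} : ℝⁿ → ℝ^ℓ is A-equivalent to the inclusion (x₁,…,xₙ) ↦ (x₁,…,xₙ, 0, …, 0). -/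
/- ### Auxiliary material -/

lemma contDiff_affineAux {m k : ℕ} (M : Matrix (Fin m) (Fin k) ℝ) (c : Fin k → ℝ)
    (d : Fin m → ℝ) :
    ContDiff ℝ (⊤ : ℕ∞) (fun x : Fin k → ℝ => M.mulVec (x + c) + d) := by
  apply contDiff_pi.mpr; intro i
  simp only [Matrix.mulVec, dotProduct, Pi.add_apply]
  exact (ContDiff.sum fun j _ =>
    contDiff_const.mul ((contDiff_pi.mp contDiff_id j).add contDiff_const)).add contDiff_const

lemma contDiff_distSqMapAux {n ℓ : ℕ} (p : Fin ℓ → (Fin n → ℝ)) :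
    ContDiff ℝ (⊤ : ℕ∞) (distSqMap p) :=
  contDiff_pi.mpr fun _ => ContDiff.sum fun j _ =>
    ((contDiff_pi.mp contDiff_id j).sub contDiff_const).pow 2

/-- First target diffeomorphism: subtract the 0-th coordinate from coordinates
`1,…,n`, and move the 0-th coordinate to slot `n`. -/
def psi1 {n ℓ : ℕ} (hn : n < ℓ) (y : Fin ℓ → ℝ) (j : Fin ℓ) : ℝ :=
  if h : (j : ℕ) < n then y ⟨(j : ℕ) + 1, by omega⟩ - y ⟨0, by omega⟩
  else if (j : ℕ) = n then y ⟨0, by omega⟩ else y j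

/-- Inverse of `psi1`. -/
def psi1i {n ℓ : ℕ} (hn : n < ℓ) (w : Fin ℓ → ℝ) (j : Fin ℓ) : ℝ :=
  if (j : ℕ) = 0 then w ⟨n, hn⟩
  else if h : (j : ℕ) < n + 1 then w ⟨(j : ℕ) - 1, by omega⟩ + w ⟨n, hn⟩ else w j

/-- Second target diffeomorphism: subtract, from each coordinate of index `≥ n`, a smooth
function of the first `n` coordinates. -/
def psi2 {n ℓ : ℕ} (hn : n < ℓ) (F : (Fin n → ℝ) → Fin ℓ → ℝ) (w : Fin ℓ → ℝ) (j : Fin ℓ) :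
    ℝ :=
  if (j : ℕ) < n then w j
  else w j - F (fun k => w ⟨(k : ℕ), by omega⟩) (if (j : ℕ) = n then ⟨0, by omega⟩ else j)

/-- Inverse of `psi2`. -/
def psi2i {n ℓ : ℕ} (hn : n < ℓ) (F : (Fin n → ℝ) → Fin ℓ → ℝ) (w : Fin ℓ → ℝ) (j : Fin ℓ) :
    ℝ :=
  if (j : ℕ) < n then w j
  else w j + F (fun k => w ⟨(k : ℕ), by omega⟩) (if (j : ℕ) = n then ⟨0, by omega⟩ else j)

lemma psi1_eval_lt {n ℓ : ℕ} (hn : n < ℓ) (y : Fin ℓ → ℝ) {j : Fin ℓ} (h : (j : ℕ) < n) :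
    psi1 hn y j = y ⟨(j : ℕ) + 1, by omega⟩ - y ⟨0, by omega⟩ := by
  unfold psi1; rw [dif_pos h]

lemma psi1_eval_eq {n ℓ : ℕ} (hn : n < ℓ) (y : Fin ℓ → ℝ) {j : Fin ℓ} (h : (j : ℕ) = n) :
    psi1 hn y j = y ⟨0, by omega⟩ := by
  unfold psi1; rw [dif_neg (by omega), if_pos h]

lemma psi1_eval_gt {n ℓ : ℕ} (hn : n < ℓ) (y : Fin ℓ → ℝ) {j : Fin ℓ} (h : n < (j : ℕ)) :
    psi1 hn y j = y j := by
  unfold psi1; rw [dif_neg (by omega), if_neg (by omega)]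

lemma psi1i_eval_zero {n ℓ : ℕ} (hn : n < ℓ) (w : Fin ℓ → ℝ) {j : Fin ℓ} (h : (j : ℕ) = 0) :
    psi1i hn w j = w ⟨n, hn⟩ := by
  unfold psi1i; rw [if_pos h]

lemma psi1i_eval_mid {n ℓ : ℕ} (hn : n < ℓ) (w : Fin ℓ → ℝ) {j : Fin ℓ} (h0 : (j : ℕ) ≠ 0)
    (h1 : (j : ℕ) < n + 1) :
    psi1i hn w j = w ⟨(j : ℕ) - 1, by omega⟩ + w ⟨n, hn⟩ := by
  unfold psi1i; rw [if_neg h0, dif_pos h1]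

lemma psi1i_eval_gt {n ℓ : ℕ} (hn : n < ℓ) (w : Fin ℓ → ℝ) {j : Fin ℓ}
    (h1 : ¬ (j : ℕ) < n + 1) :
    psi1i hn w j = w j := by
  unfold psi1i; rw [if_neg (by omega), dif_neg h1]

lemma psi1i_psi1 {n ℓ : ℕ} (hn : n < ℓ) (y : Fin ℓ → ℝ) : psi1i hn (psi1 hn y) = y := by
  funext j
  by_cases h0 : (j : ℕ) = 0
  · rw [psi1i_eval_zero hn _ h0, psi1_eval_eq hn y rfl]
    congr 1
    exact Fin.ext h0.symm
  · by_cases h1 : (j : ℕ) < n + 1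
    · rw [psi1i_eval_mid hn _ h0 h1,
        psi1_eval_lt hn y (show (j : ℕ) - 1 < n by omega),
        psi1_eval_eq hn y rfl, sub_add_cancel]
      congr 1
      apply Fin.ext
      show (j : ℕ) - 1 + 1 = (j : ℕ)
      omega
    · rw [psi1i_eval_gt hn _ h1, psi1_eval_gt hn y (by omega)]

lemma psi1_psi1i {n ℓ : ℕ} (hn : n < ℓ) (w : Fin ℓ → ℝ) : psi1 hn (psi1i hn w) = w := by
  funext j
  by_cases h : (j : ℕ) < n
  · rw [psi1_eval_lt hn _ h,
      psi1i_eval_mid hn w (show (j : ℕ) + 1 ≠ 0 by omega) (show (j : ℕ) + 1 < n + 1 by omega),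
      psi1i_eval_zero hn w rfl, add_sub_cancel_right]
    congr 1
  · by_cases h' : (j : ℕ) = n
    · rw [psi1_eval_eq hn _ h', psi1i_eval_zero hn w rfl]
      congr 1
      exact Fin.ext h'.symm
    · rw [psi1_eval_gt hn _ (by omega), psi1i_eval_gt hn w (by omega)]

lemma contDiff_psi1 {n ℓ : ℕ} (hn : n < ℓ) : ContDiff ℝ (⊤ : ℕ∞) (psi1 hn) := by
  apply contDiff_pi.mpr; intro j
  unfold psi1
  by_cases h : (j : ℕ) < n
  · simp only [dif_pos h]
    exact (contDiff_pi.mp contDiff_id _).sub (contDiff_pi.mp contDiff_id _)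
  · simp only [dif_neg h]
    by_cases h' : (j : ℕ) = n
    · simp only [if_pos h']
      exact contDiff_pi.mp contDiff_id _
    · simp only [if_neg h']
      exact contDiff_pi.mp contDiff_id _

lemma contDiff_psi1i {n ℓ : ℕ} (hn : n < ℓ) : ContDiff ℝ (⊤ : ℕ∞) (psi1i hn) := by
  apply contDiff_pi.mpr; intro j
  unfold psi1i
  by_cases h0 : (j : ℕ) = 0
  · simp only [if_pos h0]
    exact contDiff_pi.mp contDiff_id _
  · simp only [if_neg h0]
    by_cases h1 : (j : ℕ) < n + 1
    · simp only [dif_pos h1]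
      exact (contDiff_pi.mp contDiff_id _).add (contDiff_pi.mp contDiff_id _)
    · simp only [dif_neg h1]
      exact contDiff_pi.mp contDiff_id _

lemma psi2_proj {n ℓ : ℕ} (hn : n < ℓ) (F : (Fin n → ℝ) → Fin ℓ → ℝ) (w : Fin ℓ → ℝ)
    (k : Fin n) : psi2 hn F w ⟨(k : ℕ), by omega⟩ = w ⟨(k : ℕ), by omega⟩ := by
  unfold psi2
  rw [if_pos (by exact k.isLt)]

lemma psi2i_proj {n ℓ : ℕ} (hn : n < ℓ) (F : (Fin n → ℝ) → Fin ℓ → ℝ) (w : Fin ℓ → ℝ)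
    (k : Fin n) : psi2i hn F w ⟨(k : ℕ), by omega⟩ = w ⟨(k : ℕ), by omega⟩ := by
  unfold psi2i
  rw [if_pos (by exact k.isLt)]

lemma psi2i_psi2 {n ℓ : ℕ} (hn : n < ℓ) (F : (Fin n → ℝ) → Fin ℓ → ℝ) (w : Fin ℓ → ℝ) :
    psi2i hn F (psi2 hn F w) = w := by
  funext j
  have hG : (fun k : Fin n => psi2 hn F w ⟨(k : ℕ), by omega⟩)
      = fun k : Fin n => w ⟨(k : ℕ), by omega⟩ := funext fun k => psi2_proj hn F w k
  by_cases h : (j : ℕ) < n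
  · show psi2i hn F (psi2 hn F w) j = w j
    unfold psi2i
    rw [if_pos h]
    unfold psi2
    rw [if_pos h]
  · show psi2i hn F (psi2 hn F w) j = w j
    unfold psi2i
    rw [if_neg h, hG]
    show psi2 hn F w j + _ = w j
    unfold psi2
    rw [if_neg h]
    ring

lemma psi2_psi2i {n ℓ : ℕ} (hn : n < ℓ) (F : (Fin n → ℝ) → Fin ℓ → ℝ) (w : Fin ℓ → ℝ) :
    psi2 hn F (psi2i hn F w) = w := by
  funext j
  have hG : (fun k : Fin n => psi2i hn F w ⟨(k : ℕ), by omega⟩)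
      = fun k : Fin n => w ⟨(k : ℕ), by omega⟩ := funext fun k => psi2i_proj hn F w k
  by_cases h : (j : ℕ) < n
  · show psi2 hn F (psi2i hn F w) j = w j
    unfold psi2
    rw [if_pos h]
    unfold psi2i
    rw [if_pos h]
  · show psi2 hn F (psi2i hn F w) j = w j
    unfold psi2
    rw [if_neg h, hG]
    show psi2i hn F w j - _ = w j
    unfold psi2i
    rw [if_neg h]
    ring

lemma contDiff_psi2 {n ℓ : ℕ} (hn : n < ℓ) (F : (Fin n → ℝ) → Fin ℓ → ℝ)
    (hF : ContDiff ℝ (⊤ : ℕ∞) F) : ContDiff ℝ (⊤ : ℕ∞) (psi2 hn F) := by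
  apply contDiff_pi.mpr; intro j
  unfold psi2
  have hG : ContDiff ℝ (⊤ : ℕ∞) (fun w : Fin ℓ → ℝ => fun k : Fin n => w ⟨(k : ℕ), by omega⟩) :=
    contDiff_pi.mpr fun k => contDiff_pi.mp contDiff_id _
  by_cases h : (j : ℕ) < n
  · simp only [if_pos h]
    exact contDiff_pi.mp contDiff_id _
  · simp only [if_neg h]
    exact (contDiff_pi.mp contDiff_id _).sub (contDiff_pi.mp (hF.comp hG) _)

lemma contDiff_psi2i {n ℓ : ℕ} (hn : n < ℓ) (F : (Fin n → ℝ) → Fin ℓ → ℝ)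
    (hF : ContDiff ℝ (⊤ : ℕ∞) F) : ContDiff ℝ (⊤ : ℕ∞) (psi2i hn F) := by
  apply contDiff_pi.mpr; intro j
  unfold psi2i
  have hG : ContDiff ℝ (⊤ : ℕ∞) (fun w : Fin ℓ → ℝ => fun k : Fin n => w ⟨(k : ℕ), by omega⟩) :=
    contDiff_pi.mpr fun k => contDiff_pi.mp contDiff_id _
  by_cases h : (j : ℕ) < n
  · simp only [if_pos h]
    exact contDiff_pi.mp contDiff_id _
  · simp only [if_neg h]
    exact (contDiff_pi.mp contDiff_id _).add (contDiff_pi.mp (hF.comp hG) _)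

/-- for `2 ≤ n < ℓ` and `p₁,…,p_ℓ ∈ ℝⁿ` with `p₁,…,p_{n+1}` in general
position, the distance-squared mapping `D_{(p₁,…,p_ℓ)}` is `𝒜`-equivalent to the
inclusion `(x₁,…,xₙ) ↦ (x₁,…,xₙ,0,…,0)`. -/
theorem distSqMap_AEquiv_inclusion {n ℓ : ℕ} (h2 : 2 ≤ n) (hn : n < ℓ)
    (p : Fin ℓ → (Fin n → ℝ))
    (hgen : LinearIndependent ℝ
      (fun j : Fin n => p ⟨(j : ℕ) + 1, by have := j.isLt; omega⟩ - p ⟨0, by omega⟩)) :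
    AEquiv (distSqMap p)
      (fun (x : Fin n → ℝ) (i : Fin ℓ) =>
        if h : (i : ℕ) < n then x ⟨(i : ℕ), h⟩ else 0) := by
  classical
  have hl0 : (0 : ℕ) < ℓ := by omega
  set A0 : Matrix (Fin n) (Fin n) ℝ :=
    Matrix.of (fun k j : Fin n =>
      p ⟨(k : ℕ) + 1, by have := k.isLt; omega⟩ j - p ⟨0, hl0⟩ j) with hA0def
  have hA0unit : IsUnit A0 := by
    rw [← Matrix.linearIndependent_rows_iff_isUnit]
    exact hgen
  set A : Matrix (Fin n) (Fin n) ℝ := (-2 : ℝ) • A0 with hAdef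
  have hAdet : IsUnit A.det := by
    rw [hAdef, Matrix.det_smul]
    exact (isUnit_iff_ne_zero.mpr (pow_ne_zero _ (by norm_num))).mul
      ((Matrix.isUnit_iff_isUnit_det A0).mp hA0unit)
  set B : Matrix (Fin n) (Fin n) ℝ := A⁻¹ with hBdef
  have hABv : ∀ v : Fin n → ℝ, A.mulVec (B.mulVec v) = v := by
    intro v
    rw [Matrix.mulVec_mulVec, hBdef, Matrix.mul_nonsing_inv A hAdet, Matrix.one_mulVec]
  have hBAv : ∀ v : Fin n → ℝ, B.mulVec (A.mulVec v) = v := by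
    intro v
    rw [Matrix.mulVec_mulVec, hBdef, Matrix.nonsing_inv_mul A hAdet, Matrix.one_mulVec]
  set c : Fin n → ℝ := fun k =>
    ∑ j, ((p ⟨(k : ℕ) + 1, by have := k.isLt; omega⟩ j) ^ 2 - (p ⟨0, hl0⟩ j) ^ 2) with hcdef
  -- the source diffeomorphism and its inverse
  set φ : (Fin n → ℝ) → (Fin n → ℝ) := fun x => B.mulVec (x - c) with hφdef
  set φi : (Fin n → ℝ) → (Fin n → ℝ) := fun x => A.mulVec x + c with hφidef
  have hφinv1 : ∀ x, φi (φ x) = x := by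
    intro x
    rw [hφdef, hφidef]
    simp only [hABv, sub_add_cancel]
  have hφinv2 : ∀ y, φ (φi y) = y := by
    intro y
    rw [hφdef, hφidef]
    simp only [add_sub_cancel_right, hBAv]
  have hφs : ContDiff ℝ (⊤ : ℕ∞) φ := by
    have h := contDiff_affineAux B (-c) (0 : Fin n → ℝ)
    simp only [add_zero, ← sub_eq_add_neg] at h
    exact h
  have hφis : ContDiff ℝ (⊤ : ℕ∞) φi := by
    have h := contDiff_affineAux A (0 : Fin n → ℝ) c
    simpa only [add_zero] using h
  -- the key affine formula for differences of distance-squared functions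
  have hkey : ∀ (y : Fin n → ℝ) (k : Fin n),
      distSqMap p y ⟨(k : ℕ) + 1, by have := k.isLt; omega⟩ - distSqMap p y ⟨0, hl0⟩
        = A.mulVec y k + c k := by
    intro y k
    simp only [distSqMap, hAdef, hcdef, hA0def, Matrix.mulVec, dotProduct,
      Matrix.smul_apply, Matrix.of_apply, smul_eq_mul, ← Finset.sum_sub_distrib,
      ← Finset.sum_add_distrib]
    apply Finset.sum_congr rfl
    intro j _
    ring
  have hAphi : ∀ x, A.mulVec (φ x) = x - c := by
    intro x
    rw [hφdef]
    exact hABv (x - c)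
  have hkeyφ : ∀ (x : Fin n → ℝ) (k : Fin n),
      distSqMap p (φ x) ⟨(k : ℕ) + 1, by have := k.isLt; omega⟩
        - distSqMap p (φ x) ⟨0, hl0⟩ = x k := by
    intro x k
    rw [hkey (φ x) k, hAphi]
    simp
  -- the function to be subtracted in the second target diffeomorphism
  set F : (Fin n → ℝ) → Fin ℓ → ℝ := fun z => distSqMap p (φ z) with hFdef
  have hFs : ContDiff ℝ (⊤ : ℕ∞) F := (contDiff_distSqMapAux p).comp hφs
  refine ⟨φ, fun y => psi2 hn F (psi1 hn y),
    ⟨hφs, φi, hφis, hφinv1, hφinv2⟩,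
    ⟨(contDiff_psi2 hn F hFs).comp (contDiff_psi1 hn),
      fun w => psi1i hn (psi2i hn F w),
      (contDiff_psi1i hn).comp (contDiff_psi2i hn F hFs),
      fun y => by
        show psi1i hn (psi2i hn F (psi2 hn F (psi1 hn y))) = y
        rw [psi2i_psi2, psi1i_psi1],
      fun w => by
        show psi2 hn F (psi1 hn (psi1i hn (psi2i hn F w))) = w
        rw [psi1_psi1i, psi2_psi2i]⟩, ?_⟩
  funext x
  funext j
  show psi2 hn F (psi1 hn (distSqMap p (φ x))) j
      = if h : (j : ℕ) < n then x ⟨(j : ℕ), h⟩ else 0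
  have hproj : ∀ k : Fin n,
      psi1 hn (distSqMap p (φ x)) ⟨(k : ℕ), by have := k.isLt; omega⟩ = x k := by
    intro k
    rw [psi1_eval_lt hn _ (show (k : ℕ) < n from k.isLt)]
    exact hkeyφ x k
  have hGx : (fun k : Fin n =>
      psi1 hn (distSqMap p (φ x)) ⟨(k : ℕ), by have := k.isLt; omega⟩) = x :=
    funext hproj
  by_cases h : (j : ℕ) < n
  · rw [dif_pos h]
    unfold psi2
    rw [if_pos h]
    exact hproj ⟨(j : ℕ), h⟩
  · rw [dif_neg h]
    unfold psi2
    rw [if_neg h, hGx]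
    by_cases h' : (j : ℕ) = n
    · rw [if_pos h', psi1_eval_eq hn _ h']
      show distSqMap p (φ x) ⟨0, _⟩ - F x ⟨0, _⟩ = 0
      simp only [hFdef]
      exact sub_self _
    · rw [if_neg h', psi1_eval_gt hn _ (by omega)]
      show distSqMap p (φ x) j - F x j = 0
      simp only [hFdef]
      exact sub_self _
end

section
/- Let k, n be positive integers with n < k, and let p₀, …, p_k ∈ ℝ^{1,n} be points such that dim V(p₀,…,p_k) = dim V(p₀,…,p_{n+1}) = n + 1. Then the Lorentzian distance-squared mapping L_{(p₀,…,p_k)} : ℝ^{1,n} → ℝ^{k+1} is A-equivalent to the inclusion (x₀,…,xₙ) ↦ (x₀,…,xₙ, 0, …, 0). -/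
/-- The Lorentzian inner product `⟨x,y⟩ = -x₀y₀ + x₁y₁ + ⋯ + xₙyₙ` on `ℝ^{1,n}`. -/
def lorentz {n : ℕ} (x y : Fin (n + 1) → ℝ) : ℝ :=
  -(x 0 * y 0) + ∑ i : Fin n, x i.succ * y i.succ

/-- The Lorentzian distance-squared mapping
`L_{(p₀,…,p_k)}(x) = (⟨x-p₀,x-p₀⟩, …, ⟨x-p_k,x-p_k⟩)`. -/
def lorentzDistSqMap {n k : ℕ} (p : Fin (k + 1) → (Fin (n + 1) → ℝ))
    (x : Fin (n + 1) → ℝ) : Fin (k + 1) → ℝ :=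
  fun i => lorentz (x - p i) (x - p i)

/-- The recognition subspace `V(p₀,…,p_k)`, the span of `p₁ - p₀, …, p_k - p₀`. -/
def recSub {n k : ℕ} (p : Fin (k + 1) → (Fin (n + 1) → ℝ)) : Submodule ℝ (Fin (n + 1) → ℝ) :=
  Submodule.span ℝ (Set.range fun i : Fin k => p i.succ - p 0)

/-- A subspace of `ℝ^{1,n}` is time-like if it contains a time-like vector. -/
def TimeLike {n : ℕ} (W : Submodule ℝ (Fin (n + 1) → ℝ)) : Prop :=
  ∃ v ∈ W, lorentz v v < 0

/-- A subspace of `ℝ^{1,n}` is space-like if every nonzero vector in it is space-like. -/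
def SpaceLike {n : ℕ} (W : Submodule ℝ (Fin (n + 1) → ℝ)) : Prop :=
  ∀ v ∈ W, v ≠ 0 → 0 < lorentz v v

/-- A subspace of `ℝ^{1,n}` is light-like if it is neither time-like nor space-like. -/
def LightLike {n : ℕ} (W : Submodule ℝ (Fin (n + 1) → ℝ)) : Prop :=
  ¬ TimeLike W ∧ ¬ SpaceLike W

lemma lorentz_add_left {n : ℕ} (x y z : Fin (n+1) → ℝ) :
    lorentz (x + y) z = lorentz x z + lorentz y z := by
  simp [lorentz, add_mul, Finset.sum_add_distrib]; ring

lemma lorentz_smul_left {n : ℕ} (c : ℝ) (x z : Fin (n+1) → ℝ) :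
    lorentz (c • x) z = c * lorentz x z := by
  simp [lorentz, Finset.mul_sum, mul_add]; ring_nf

lemma lorentz_sub_right {n : ℕ} (x a b : Fin (n+1) → ℝ) :
    lorentz x (a - b) = lorentz x a - lorentz x b := by
  simp [lorentz, mul_sub, Finset.sum_sub_distrib]; ring

lemma lorentz_sub_left {n : ℕ} (a b z : Fin (n+1) → ℝ) :
    lorentz (a - b) z = lorentz a z - lorentz b z := by
  simp [lorentz, sub_mul, Finset.sum_sub_distrib]; ring

lemma lorentz_add_right {n : ℕ} (x a b : Fin (n+1) → ℝ) :
    lorentz x (a + b) = lorentz x a + lorentz x b := by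
  simp [lorentz, mul_add, Finset.sum_add_distrib]; ring

lemma lorentz_smul_right {n : ℕ} (c : ℝ) (x z : Fin (n+1) → ℝ) :
    lorentz x (c • z) = c * lorentz x z := by
  simp [lorentz, Finset.mul_sum, mul_add]; ring_nf

lemma lorentz_comm {n : ℕ} (x y : Fin (n+1) → ℝ) : lorentz x y = lorentz y x := by
  simp [lorentz, mul_comm]

lemma lorentz_expand {n : ℕ} (x p : Fin (n+1) → ℝ) :
    lorentz (x - p) (x - p) = lorentz x x - 2 * lorentz x p + lorentz p p := by
  rw [lorentz_sub_left, lorentz_sub_right, lorentz_sub_right, lorentz_comm p x]; ring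

lemma lorentz_nondegen {n : ℕ} {x : Fin (n+1) → ℝ} (h : ∀ v, lorentz x v = 0) : x = 0 := by
  funext m
  induction m using Fin.cases with
  | zero =>
    have h0 := h (Pi.single 0 1)
    simp [lorentz, Pi.single_apply, Fin.succ_ne_zero] at h0
    simpa using h0
  | succ i =>
    have h1 := h (Pi.single i.succ 1)
    simp [lorentz, Pi.single_apply, (Fin.succ_ne_zero i).symm, Fin.succ_inj] at h1
    simpa using h1

lemma contDiff_lorentz {n : ℕ} {E : Type*} [NormedAddCommGroup E] [NormedSpace ℝ E]
    {f g : E → (Fin (n+1) → ℝ)} (hf : ContDiff ℝ (⊤:ℕ∞) f) (hg : ContDiff ℝ (⊤:ℕ∞) g) :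
    ContDiff ℝ (⊤:ℕ∞) fun x => lorentz (f x) (g x) := by
  have hf' : ∀ i, ContDiff ℝ (⊤:ℕ∞) fun x => f x i := contDiff_pi.mp hf
  have hg' : ∀ i, ContDiff ℝ (⊤:ℕ∞) fun x => g x i := contDiff_pi.mp hg
  simp only [lorentz]
  exact (((hf' 0).mul (hg' 0)).neg).add
    (ContDiff.sum fun i _ => (hf' i.succ).mul (hg' i.succ))

noncomputable def lorentzBilin (n : ℕ) :
    (Fin (n+1) → ℝ) →ₗ[ℝ] (Fin (n+1) → ℝ) →ₗ[ℝ] ℝ :=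
  LinearMap.mk₂ ℝ lorentz lorentz_add_left lorentz_smul_left lorentz_add_right lorentz_smul_right

/-- for positive integers `n < k` and points `p₀,…,p_k ∈ ℝ^{1,n}` with
`dim V(p₀,…,p_k) = dim V(p₀,…,p_{n+1}) = n + 1`, the mapping `L_{(p₀,…,p_k)}` is
`𝒜`-equivalent to the inclusion `(x₀,…,xₙ) ↦ (x₀,…,xₙ,0,…,0)`. -/
theorem lorentzDistSqMap_AEquiv_inclusion {k n : ℕ} (hn : 1 ≤ n) (hnk : n < k)
    (p : Fin (k + 1) → (Fin (n + 1) → ℝ))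
    (hdim : Module.finrank ℝ (recSub p) = n + 1)
    (hdimn : Module.finrank ℝ
      (Submodule.span ℝ
        (Set.range fun i : Fin (n + 1) =>
          p ⟨(i : ℕ) + 1, by have := i.isLt; omega⟩ - p 0)) = n + 1) :
    AEquiv (lorentzDistSqMap p)
      (fun (x : Fin (n + 1) → ℝ) (i : Fin (k + 1)) =>
        if h : (i : ℕ) < n + 1 then x ⟨(i : ℕ), h⟩ else 0) := by
  classical
  have hlt : ∀ i : Fin (n+1), (i:ℕ) + 1 < k + 1 := fun i => by have := i.isLt; omega
  have hlt0 : ∀ i : Fin (n+1), (i:ℕ) < k + 1 := fun i => by have := i.isLt; omega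
  set q : Fin (n+1) → (Fin (n+1) → ℝ) := fun i => p ⟨(i:ℕ)+1, hlt i⟩ - p 0 with hqdef
  have hdimn' : Module.finrank ℝ (Submodule.span ℝ (Set.range q)) = n + 1 := hdimn
  have hspan : Submodule.span ℝ (Set.range q) = ⊤ := by
    apply Submodule.eq_top_of_finrank_eq
    rw [hdimn', Module.finrank_pi]
    simp
  let T : (Fin (n+1) → ℝ) →ₗ[ℝ] (Fin (n+1) → ℝ) :=
    LinearMap.pi fun i => (-2 : ℝ) • ((lorentzBilin n).flip (q i))
  have hT : ∀ (x : Fin (n+1) → ℝ) (i : Fin (n+1)), T x i = -2 * lorentz x (q i) := by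
    intro x i
    simp [T, lorentzBilin, LinearMap.pi_apply]
  have hTinj : Function.Injective T := by
    rw [← LinearMap.ker_eq_bot, LinearMap.ker_eq_bot']
    intro x hx
    apply lorentz_nondegen
    intro v
    have hsub : Submodule.span ℝ (Set.range q) ≤ LinearMap.ker ((lorentzBilin n) x) := by
      rw [Submodule.span_le]
      rintro _ ⟨i, rfl⟩
      have h0 : T x i = 0 := by rw [hx]; rfl
      rw [hT] at h0
      have : lorentz x (q i) = 0 := by linarith
      simpa [lorentzBilin, LinearMap.mem_ker] using this
    have hv : v ∈ LinearMap.ker ((lorentzBilin n) x) := hsub (hspan ▸ Submodule.mem_top)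
    simpa [lorentzBilin, LinearMap.mem_ker] using hv
  have hTbij : Function.Bijective T :=
    ⟨hTinj, (LinearMap.injective_iff_surjective).mp hTinj⟩
  let Te : (Fin (n+1) → ℝ) ≃ₗ[ℝ] (Fin (n+1) → ℝ) := LinearEquiv.ofBijective T hTbij
  let d : Fin (n+1) → ℝ := fun i =>
    lorentz (p ⟨(i:ℕ)+1, hlt i⟩) (p ⟨(i:ℕ)+1, hlt i⟩) - lorentz (p 0) (p 0)
  let φ : (Fin (n+1) → ℝ) → (Fin (n+1) → ℝ) := fun x => Te.symm (x - d)
  let φinv : (Fin (n+1) → ℝ) → (Fin (n+1) → ℝ) := fun y => T y + d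
  have hTφ : ∀ x, T (φ x) = x - d := fun x => Te.apply_symm_apply (x - d)
  have hφ_left : ∀ x, φinv (φ x) = x := by
    intro x; simp only [φinv, hTφ]; abel
  have hφ_right : ∀ y, φ (φinv y) = y := by
    intro y
    simp only [φ, φinv, add_sub_cancel_right]
    exact Te.symm_apply_apply y
  have hφs : ContDiff ℝ (⊤:ℕ∞) φ := by
    have : ContDiff ℝ (⊤:ℕ∞) fun x : Fin (n+1) → ℝ => x - d :=
      contDiff_id.sub contDiff_const
    exact (Te.symm.toLinearMap.toContinuousLinearMap.contDiff).comp this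
  have hφinvs : ContDiff ℝ (⊤:ℕ∞) φinv :=
    (T.toContinuousLinearMap.contDiff).add contDiff_const
  -- key identity
  have key : ∀ (x : Fin (n+1) → ℝ) (i : Fin (n+1)),
      lorentzDistSqMap p (φ x) ⟨(i:ℕ)+1, hlt i⟩ = lorentzDistSqMap p (φ x) 0 + x i := by
    intro x i
    have h2 : T (φ x) i = x i - d i := by rw [hTφ]; rfl
    rw [hT] at h2
    have h3 : lorentz (φ x) (q i) =
        lorentz (φ x) (p ⟨(i:ℕ)+1, hlt i⟩) - lorentz (φ x) (p 0) := lorentz_sub_right _ _ _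
    simp only [lorentzDistSqMap, lorentz_expand]
    have hd : d i = lorentz (p ⟨(i:ℕ)+1, hlt i⟩) (p ⟨(i:ℕ)+1, hlt i⟩)
        - lorentz (p 0) (p 0) := rfl
    rw [h3] at h2
    linarith [h2, hd]
  let G : Fin (k+1) → (Fin (n+1) → ℝ) → ℝ := fun j x => lorentz (φ x - p j) (φ x - p j)
  have hGL : ∀ j x, G j x = lorentzDistSqMap p (φ x) j := fun _ _ => rfl
  have hGs : ∀ j, ContDiff ℝ (⊤:ℕ∞) (G j) := fun j =>
    contDiff_lorentz (hφs.sub contDiff_const) (hφs.sub contDiff_const)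
  let u : (Fin (k+1) → ℝ) → (Fin (n+1) → ℝ) := fun y i => y ⟨(i:ℕ)+1, hlt i⟩ - y 0
  have hproj : ∀ m : Fin (k+1), ContDiff ℝ (⊤:ℕ∞) fun y : Fin (k+1) → ℝ => y m :=
    contDiff_pi.mp contDiff_id
  have hus : ContDiff ℝ (⊤:ℕ∞) u :=
    contDiff_pi.mpr fun i => (hproj _).sub (hproj 0)
  let ψ : (Fin (k+1) → ℝ) → (Fin (k+1) → ℝ) := fun y j =>
    if h : (j:ℕ) < n + 1 then y ⟨(j:ℕ)+1, by omega⟩ - y 0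
    else if (j:ℕ) = n + 1 then y 0 - G 0 (u y)
    else y j - y 0 - (G j (u y) - G 0 (u y))
  let zf : (Fin (k+1) → ℝ) → (Fin (n+1) → ℝ) := fun z i => z ⟨(i:ℕ), hlt0 i⟩
  let Y0 : (Fin (k+1) → ℝ) → ℝ := fun z => z ⟨n+1, by omega⟩ + G 0 (zf z)
  let ψinv : (Fin (k+1) → ℝ) → (Fin (k+1) → ℝ) := fun z j =>
    if (j:ℕ) = 0 then Y0 z
    else if h : (j:ℕ) < n + 2 then z ⟨(j:ℕ)-1, by omega⟩ + Y0 z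
    else z j + Y0 z + (G j (zf z) - G 0 (zf z))
  have hzfs : ContDiff ℝ (⊤:ℕ∞) zf := contDiff_pi.mpr fun i => hproj _
  have hY0s : ContDiff ℝ (⊤:ℕ∞) Y0 := (hproj _).add ((hGs 0).comp hzfs)
  have hψs : ContDiff ℝ (⊤:ℕ∞) ψ := by
    apply contDiff_pi.mpr
    intro j
    by_cases h1 : (j:ℕ) < n + 1
    · simp only [ψ, dif_pos h1]
      exact (hproj _).sub (hproj 0)
    · by_cases h2 : (j:ℕ) = n + 1
      · simp only [ψ, dif_neg h1, if_pos h2]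
        exact (hproj 0).sub ((hGs 0).comp hus)
      · simp only [ψ, dif_neg h1, if_neg h2]
        exact ((hproj j).sub (hproj 0)).sub (((hGs j).comp hus).sub ((hGs 0).comp hus))
  have hψinvs : ContDiff ℝ (⊤:ℕ∞) ψinv := by
    apply contDiff_pi.mpr
    intro j
    by_cases h1 : (j:ℕ) = 0
    · simp only [ψinv, if_pos h1]; exact hY0s
    · by_cases h2 : (j:ℕ) < n + 2
      · simp only [ψinv, if_neg h1, dif_pos h2]
        exact (hproj _).add hY0s
      · simp only [ψinv, if_neg h1, dif_neg h2]
        exact (((hproj j).add hY0s)).add (((hGs j).comp hzfs).sub ((hGs 0).comp hzfs))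
  -- basic coordinate facts
  -- coordinate formulas in ℕ-indexed normal form
  have hψ_lt : ∀ y (m : ℕ) (h : m < n + 1) (hm : m < k + 1),
      ψ y ⟨m, hm⟩ = y ⟨m+1, by omega⟩ - y 0 := by
    intro y m h hm; simp only [ψ]; rw [dif_pos h]
  have hψ_top : ∀ y (hm : n + 1 < k + 1),
      ψ y ⟨n+1, hm⟩ = y 0 - G 0 (u y) := by
    intro y hm; simp only [ψ]; rw [dif_neg (by omega)]; simp
  have hψ_else : ∀ y (m : ℕ) (h1 : ¬ m < n + 1) (h2 : m ≠ n + 1) (hm : m < k + 1),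
      ψ y ⟨m, hm⟩ = y ⟨m, hm⟩ - y 0 - (G ⟨m, hm⟩ (u y) - G 0 (u y)) := by
    intro y m h1 h2 hm; simp only [ψ]; rw [dif_neg h1, if_neg h2]
  have hψinv_0 : ∀ z, ψinv z 0 = Y0 z := by
    intro z; simp only [ψinv]; rw [if_pos (by simp)]
  have hψinv_mid : ∀ z (m : ℕ) (h1 : m ≠ 0) (h2 : m < n + 2) (hm : m < k + 1),
      ψinv z ⟨m, hm⟩ = z ⟨m-1, by omega⟩ + Y0 z := by
    intro z m h1 h2 hm; simp only [ψinv]; rw [if_neg h1, dif_pos h2]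
  have hψinv_else : ∀ z (m : ℕ) (h1 : m ≠ 0) (h2 : ¬ m < n + 2) (hm : m < k + 1),
      ψinv z ⟨m, hm⟩ = z ⟨m, hm⟩ + Y0 z + (G ⟨m, hm⟩ (zf z) - G 0 (zf z)) := by
    intro z m h1 h2 hm; simp only [ψinv]; rw [if_neg h1, dif_neg h2]
  have hzfψ : ∀ y, zf (ψ y) = u y := by
    intro y; funext i
    exact hψ_lt y (i:ℕ) i.isLt (hlt0 i)
  have huψinv : ∀ z, u (ψinv z) = zf z := by
    intro z; funext i
    show ψinv z ⟨(i:ℕ)+1, hlt i⟩ - ψinv z 0 = z ⟨(i:ℕ), hlt0 i⟩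
    rw [hψinv_mid z ((i:ℕ)+1) (Nat.succ_ne_zero _) (by have := i.isLt; omega) (hlt i),
      hψinv_0]
    rw [show (⟨(i:ℕ)+1-1, by omega⟩ : Fin (k+1)) = ⟨(i:ℕ), hlt0 i⟩ from
      Fin.ext (show (i:ℕ)+1-1 = (i:ℕ) by omega)]
    ring
  have hY0ψ : ∀ y, Y0 (ψ y) = y 0 := by
    intro y
    show ψ y ⟨n+1, by omega⟩ + G 0 (zf (ψ y)) = y 0
    rw [hψ_top y (by omega), hzfψ]; ring
  have hψinv_left : ∀ y, ψinv (ψ y) = y := by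
    intro y; funext j
    obtain ⟨m, hm⟩ := j
    by_cases h1 : m = 0
    · subst h1
      rw [show (⟨0, hm⟩ : Fin (k+1)) = 0 from Fin.ext rfl, hψinv_0, hY0ψ]
    · by_cases h2 : m < n + 2
      · rw [hψinv_mid (ψ y) m h1 h2 hm, hY0ψ,
          hψ_lt y (m-1) (by omega) (by omega)]
        rw [show (⟨m-1+1, by omega⟩ : Fin (k+1)) = ⟨m, hm⟩ from
          Fin.ext (show m-1+1 = m by omega)]
        ring
      · rw [hψinv_else (ψ y) m h1 h2 hm, hY0ψ, hzfψ,
          hψ_else y m (by omega) (by omega) hm]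
        ring
  have hψinv_right : ∀ z, ψ (ψinv z) = z := by
    intro z; funext j
    obtain ⟨m, hm⟩ := j
    by_cases h1 : m < n + 1
    · rw [hψ_lt (ψinv z) m h1 hm,
        hψinv_mid z (m+1) (Nat.succ_ne_zero _) (by omega) (by omega), hψinv_0]
      rw [show (⟨m+1-1, by omega⟩ : Fin (k+1)) = ⟨m, hm⟩ from
        Fin.ext (show m+1-1 = m by omega)]
      ring
    · by_cases h2 : m = n + 1
      · subst h2
        rw [hψ_top (ψinv z) hm, hψinv_0, huψinv]
        show Y0 z - G 0 (zf z) = z ⟨n+1, hm⟩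
        simp only [Y0]
        rw [show (⟨n+1, by omega⟩ : Fin (k+1)) = ⟨n+1, hm⟩ from Fin.ext rfl]
        ring
      · rw [hψ_else (ψinv z) m h1 h2 hm, hψinv_else z m (by omega) (by omega) hm,
          hψinv_0, huψinv]
        ring
  -- final composition
  refine ⟨φ, ψ, ⟨hφs, φinv, hφinvs, hφ_left, hφ_right⟩,
    ⟨hψs, ψinv, hψinvs, hψinv_left, hψinv_right⟩, ?_⟩
  funext x j
  simp only [Function.comp_apply]
  have hux : u (lorentzDistSqMap p (φ x)) = x := by
    funext i
    show lorentzDistSqMap p (φ x) ⟨(i:ℕ)+1, hlt i⟩ - lorentzDistSqMap p (φ x) 0 = x i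
    rw [key]; ring
  obtain ⟨m, hm⟩ := j
  by_cases h1 : m < n + 1
  · rw [hψ_lt _ m h1 hm]
    simp only [dif_pos h1]
    have hk2 := key x ⟨m, h1⟩
    rw [show (⟨((⟨m, h1⟩ : Fin (n+1)):ℕ)+1, hlt _⟩ : Fin (k+1)) = ⟨m+1, by omega⟩ from
      Fin.ext rfl] at hk2
    rw [hk2]; ring
  · simp only [dif_neg h1]
    by_cases h2 : m = n + 1
    · subst h2
      rw [hψ_top _ hm, hux, hGL]; ring
    · rw [hψ_else _ m h1 h2 hm, hux, hGL, hGL]; ring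
end

section
/- Let A₂ be a 2×2 matrix of rank two with non-zero entries, and let p₀, p₁ ∈ ℝ² satisfy (p₀,p₁) ∈ (ℝ²)² − Σ, where Σ ⊂ (ℝ²)² is the hypersurface defined by (x₀−x₁)(y₀−y₁) = 0 in the standard coordinates ((x₀,y₀),(x₁,y₁)). Then for any positive real numbers a, b with a ≠ b, there exists a point q = (q₀,q₁) ∈ ℝ² such that (q,(0,0)) ∈ (ℝ²)² − Σ and G_{(p₀,p₁,A₂)} is A-equivalent to the mapping F_q : ℝ² → ℝ² defined by F_q(x,y) = ((x−q₀)² + (y−q₁)², ax² + by²). -/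
/-- The generalized distance-squared mapping `G_{(p₀,p₁,A)} : ℝ² → ℝ²`. -/
def genDistSqMap (p : Fin 2 → (Fin 2 → ℝ)) (A : Matrix (Fin 2) (Fin 2) ℝ)
    (x : Fin 2 → ℝ) : Fin 2 → ℝ :=
  fun i => ∑ j, A i j * (x j - p i j) ^ 2

/-! The quadratic parts of the two components of `G` are `A *ᵥ (x₀², x₁²)`. Since `A` is
invertible, the linear target change `N = !![1, 1; a, b] * A⁻¹` turns them into `x₀² + x₁²` and
`a x₀² + b x₁²`. A translation of the source then kills the linear terms of the second component
(as `a, b ≠ 0`); the linear terms left in the first one are `-2 (q₀ x₀ + q₁ x₁)` for some `q`, and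
constants are absorbed by the target. Finally `q j = (N₀₀ - N₁₀ / c j) A₀ⱼ (p₀ⱼ - p₁ⱼ)` with
`c = (a, b)`, and the first factor vanishes only if the rows of `N` are proportional, which would
force `a = b`. -/

open Matrix

theorem Matrix.isUnit_of_rank_eq_card {K n : Type*} [Field K] [Fintype n] [DecidableEq n]
    {A : Matrix n n K} (h : A.rank = Fintype.card n) : IsUnit A := by
  refine mulVec_surjective_iff_isUnit.1 fun v => ?_
  have : LinearMap.range A.mulVecLin = ⊤ :=
    Submodule.eq_top_of_finrank_eq (by rw [Module.finrank_fintype_fun_eq_card]; exact h)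
  exact LinearMap.range_eq_top.1 this v

theorem isSmoothDiffeo_mulVec_add {n : Type*} [Fintype n] [DecidableEq n] {M : Matrix n n ℝ}
    (hM : IsUnit M.det) (d : n → ℝ) : IsSmoothDiffeo fun x => M *ᵥ x + d := by
  have hlin : ∀ N : Matrix n n ℝ, ContDiff ℝ (⊤ : ℕ∞) (N *ᵥ ·) := fun N =>
    (LinearMap.toContinuousLinearMap N.mulVecLin).contDiff
  refine ⟨(hlin M).add contDiff_const, fun y => M⁻¹ *ᵥ (y - d),
    (hlin M⁻¹).comp (contDiff_id.sub contDiff_const), fun x => ?_, fun y => ?_⟩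
  · simp [mulVec_mulVec, nonsing_inv_mul _ hM]
  · simp [mulVec_mulVec, mul_nonsing_inv _ hM]

theorem isSmoothDiffeo_add_const {E : Type*} [NormedAddCommGroup E] [NormedSpace ℝ E] (s : E) :
    IsSmoothDiffeo (· + s) :=
  ⟨contDiff_id.add contDiff_const, (· - s), contDiff_id.sub contDiff_const,
    fun x => add_sub_cancel_right x s, fun y => sub_add_cancel y s⟩

theorem AEquiv.of_mulVec_add {m n : Type*} [Fintype m] [DecidableEq m] [Fintype n]
    {f g : (n → ℝ) → m → ℝ} (M : Matrix m m ℝ) (hM : IsUnit M.det) (s : n → ℝ) (d : m → ℝ)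
    (h : ∀ x, M *ᵥ f (x + s) + d = g x) : AEquiv f g :=
  ⟨(· + s), (M *ᵥ · + d), isSmoothDiffeo_add_const s, isSmoothDiffeo_mulVec_add hM d, funext h⟩

/-- The paper's `F_q`, with the weights `(a, b)` written `(c 0, c 1)`. -/
def normalFormMap (q c : Fin 2 → ℝ) (x : Fin 2 → ℝ) : Fin 2 → ℝ :=
  ![(x 0 - q 0) ^ 2 + (x 1 - q 1) ^ 2, c 0 * x 0 ^ 2 + c 1 * x 1 ^ 2]

section NormalForm

variable (N A : Matrix (Fin 2) (Fin 2) ℝ) (p : Fin 2 → Fin 2 → ℝ) (c : Fin 2 → ℝ)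

noncomputable def normalShift : Fin 2 → ℝ := fun j => (∑ i, N 1 i * A i j * p i j) / c j

noncomputable def normalCentre : Fin 2 → ℝ :=
  fun j => ∑ i, N 0 i * A i j * p i j - normalShift N A p c j

variable {N A c}

theorem mulVec_genDistSqMap_add_normalShift (hN0 : ∀ j, (N * A) 0 j = 1)
    (hN1 : ∀ j, (N * A) 1 j = c j) (hc : ∀ j, c j ≠ 0) (x : Fin 2 → ℝ) :
    N *ᵥ (genDistSqMap p A (x + normalShift N A p c) - genDistSqMap p A (normalShift N A p c)) =
      normalFormMap (normalCentre N A p c) c x - normalFormMap (normalCentre N A p c) c 0 := by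
  set s := normalShift N A p c
  have hs : ∀ j, c j * s j = ∑ i, N 1 i * A i j * p i j := fun j => mul_div_cancel₀ _ (hc j)
  have hq : ∀ j, normalCentre N A p c j = ∑ i, N 0 i * A i j * p i j - s j := fun j => rfl
  simp only [mul_apply, Fin.sum_univ_two] at hN0 hN1 hs hq
  funext i
  fin_cases i <;>
    simp only [mulVec, dotProduct, Fin.sum_univ_two, genDistSqMap, normalFormMap, hq, Pi.sub_apply,
      Pi.add_apply, Pi.zero_apply, Fin.zero_eta, Fin.mk_one, cons_val_zero,
      cons_val_one, cons_val_fin_one]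
  · linear_combination (x 0 ^ 2 + 2 * x 0 * s 0) * hN0 0 + (x 1 ^ 2 + 2 * x 1 * s 1) * hN0 1
  · linear_combination (x 0 ^ 2 + 2 * x 0 * s 0) * hN1 0 + (x 1 ^ 2 + 2 * x 1 * s 1) * hN1 1
      + 2 * x 0 * hs 0 + 2 * x 1 * hs 1

theorem aEquiv_normalFormMap_normalCentre (p : Fin 2 → Fin 2 → ℝ) (hN : IsUnit N.det)
    (hN0 : ∀ j, (N * A) 0 j = 1) (hN1 : ∀ j, (N * A) 1 j = c j) (hc : ∀ j, c j ≠ 0) :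
    AEquiv (genDistSqMap p A) (normalFormMap (normalCentre N A p c) c) := by
  refine .of_mulVec_add N hN (normalShift N A p c)
    (normalFormMap (normalCentre N A p c) c 0 - N *ᵥ genDistSqMap p A (normalShift N A p c))
    fun x => ?_
  have h := mulVec_genDistSqMap_add_normalShift p hN0 hN1 hc x
  rw [mulVec_sub] at h
  linear_combination (norm := module) h

variable {p} {j : Fin 2}

theorem normalCentre_eq (hN0 : (N * A) 0 j = 1) (hN1 : (N * A) 1 j = c j) (hcj : c j ≠ 0) :
    normalCentre N A p c j = (N 0 0 - N 1 0 / c j) * A 0 j * (p 0 j - p 1 j) := by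
  simp only [mul_apply, Fin.sum_univ_two] at hN0 hN1
  simp only [normalCentre, normalShift, Fin.sum_univ_two]
  field_simp
  linear_combination p 1 j * (c j * hN0 - hN1)

theorem normalCentre_ne_zero (hN0 : ∀ k, (N * A) 0 k = 1) (hN1 : ∀ k, (N * A) 1 k = c k)
    (hc : c 0 ≠ c 1) (hcj : c j ≠ 0) (hA : ∀ i, A i j ≠ 0) (hp : p 0 j ≠ p 1 j) :
    normalCentre N A p c j ≠ 0 := by
  rw [normalCentre_eq (hN0 j) (hN1 j) hcj]
  refine mul_ne_zero (mul_ne_zero ?_ (hA 0)) (sub_ne_zero.2 hp)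
  intro h
  simp only [mul_apply, Fin.sum_univ_two] at hN0 hN1
  have hrow0 : N 1 0 = c j * N 0 0 := by
    field_simp at h; linarith
  have hrow1 : N 1 1 = c j * N 0 1 := by
    apply mul_right_cancel₀ (hA 1)
    linear_combination hN1 j - c j * hN0 j - A 0 j * hrow0
  have hconst : ∀ k, c k = c j := fun k => by
    linear_combination -(hN1 k) + c j * hN0 k + A 0 k * hrow0 + A 1 k * hrow1
  exact hc ((hconst 0).trans (hconst 1).symm)

end NormalForm

/-- for a rank-two `2×2` matrix `A₂` with non-zero entries and `(p₀,p₁)`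
off the hypersurface `(x₀-x₁)(y₀-y₁)=0`, for any positive reals `a ≠ b` there is a
point `q = (q₀,q₁)` with `(q,(0,0))` off the hypersurface such that `G_{(p₀,p₁,A₂)}`
is `𝒜`-equivalent to `F_q(x,y) = ((x-q₀)² + (y-q₁)², ax² + by²)`. -/
theorem genDistSqMap_AEquiv_Fq (p : Fin 2 → (Fin 2 → ℝ))
    (hp : (p 0 0 - p 1 0) * (p 0 1 - p 1 1) ≠ 0)
    (A₂ : Matrix (Fin 2) (Fin 2) ℝ) (hA₂rank : A₂.rank = 2) (hA₂ : ∀ i j, A₂ i j ≠ 0)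
    (a b : ℝ) (ha : 0 < a) (hb : 0 < b) (hab : a ≠ b) :
    ∃ q : Fin 2 → ℝ, (q 0 - 0) * (q 1 - 0) ≠ 0 ∧
      AEquiv (genDistSqMap p A₂)
        (fun x : Fin 2 → ℝ =>
          ![(x 0 - q 0) ^ 2 + (x 1 - q 1) ^ 2, a * x 0 ^ 2 + b * x 1 ^ 2]) := by
  have hA : IsUnit A₂.det :=
    (isUnit_iff_isUnit_det A₂).1 (isUnit_of_rank_eq_card (by simpa using hA₂rank))
  set K : Matrix (Fin 2) (Fin 2) ℝ := !![1, 1; a, b]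
  have hK : IsUnit K.det := by simpa [K, det_fin_two_of, sub_eq_zero] using hab.symm
  set N := K * A₂⁻¹
  have hNA : N * A₂ = K := by rw [mul_assoc, nonsing_inv_mul _ hA, mul_one]
  have hN0 : ∀ j, (N * A₂) 0 j = 1 := by intro j; fin_cases j <;> simp [hNA, K]
  have hN1 : ∀ j, (N * A₂) 1 j = ![a, b] j := by intro j; fin_cases j <;> simp [hNA, K]
  have hc : ∀ j, ![a, b] j ≠ 0 := by intro j; fin_cases j; exacts [ha.ne', hb.ne']
  have hcentre : ∀ j, p 0 j ≠ p 1 j → normalCentre N A₂ p ![a, b] j ≠ 0 := fun j =>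
    normalCentre_ne_zero hN0 hN1 hab (hc j) (hA₂ · j)
  refine ⟨normalCentre N A₂ p ![a, b], ?_, ?_⟩
  · rw [sub_zero, sub_zero]
    exact mul_ne_zero (hcentre 0 (sub_ne_zero.1 (left_ne_zero_of_mul hp)))
      (hcentre 1 (sub_ne_zero.1 (right_ne_zero_of_mul hp)))
  · have hN : IsUnit N.det := by
      rw [det_mul]; exact hK.mul (isUnit_nonsing_inv_det _ hA)
    exact aEquiv_normalFormMap_normalCentre p hN hN0 hN1 hc
end
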